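/- arXiv:2501.11409 — 2 statements merged into one kernel-verified Lean document; each statement's English description precedes it below -/
import Mathlib

section
/- Let σ : ℝ^{n_r} → ℝ^{n_r} be a bijection with inverse τ, let A ∈ ℝ^{n_r × n_in} have rank(A) = n_in (so that AᵀA is invertible, and set A⁺ := (AᵀA)⁻¹Aᵀ), let B ∈ ℝ^{n_r × n_r}, and suppose d_1,…,d_T ∈ ℝ^{n_in} and r_1,…,r_{T+1} ∈ ℝ^{n_r} satisfy r_{t+1} = σ(A d_t + B r_t) for all t = 1,…,T. Let 𝒟_{1,T} ∈ ℝ^{n_in × T} have columns d_1,…,d_T, let ℛ_{1,T} ∈ ℝ^{n_r × T} have columns r_1,…,r_T, let ℛ_{2,T+1} ∈ ℝ^{n_r × T} have columns r_2,…,r_{T+1}, and let P ∈ ℝ^{T × n_r} be any matrix satisfying the four Penrose equations for ℛ_{1,T} (ℛ_{1,T} P ℛ_{1,T} = ℛ_{1,T}, P ℛ_{1,T} P = P, (ℛ_{1,T} P)ᵀ = ℛ_{1,T} P, (P ℛ_{1,T})ᵀ = P ℛ_{1,T}). Then the supervised least-squares readout W_𝒟 := 𝒟_{1,T} P satisfies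 W_𝒟 = A⁺ (τ(ℛ_{2,T+1}) − B ℛ_{1,T}) P; that is, the least-squares solution for input reconstruction can be computed from the reservoir states and the fixed ESN parameters σ, A, B alone, without the original inputs. -/
open Matrix

/-- Theorem 3: with `σ` a bijection with inverse `τ`, `A` of full column rank,
and `P` any matrix satisfying the four Penrose equations for `ℛ_{1,T}` (i.e. a Moore–Penrose
inverse of `ℛ_{1,T}`), the supervised least-squares readout `W_𝒟 = 𝒟_{1,T} P` equals the
unsupervised expression `A⁺ (τ(ℛ_{2,T+1}) − B ℛ_{1,T}) P`, which does not use the inputs. -/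
theorem unsupervised_readout_general
    {n_r n_in T : ℕ}
    (σ τ : (Fin n_r → ℝ) → (Fin n_r → ℝ))
    (hστ : Function.LeftInverse τ σ) (hτσ : Function.RightInverse τ σ)
    (A : Matrix (Fin n_r) (Fin n_in) ℝ) (hA : A.rank = n_in)
    (B : Matrix (Fin n_r) (Fin n_r) ℝ)
    (d : Fin T → (Fin n_in → ℝ)) (r : Fin (T + 1) → (Fin n_r → ℝ))
    (hESN : ∀ t : Fin T, r t.succ = σ (A.mulVec (d t) + B.mulVec (r t.castSucc)))
    (D : Matrix (Fin n_in) (Fin T) ℝ) (hD : D = Matrix.of fun i t => d t i)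
    (R₁ : Matrix (Fin n_r) (Fin T) ℝ) (hR₁ : R₁ = Matrix.of fun i t => r t.castSucc i)
    (τR₂ : Matrix (Fin n_r) (Fin T) ℝ) (hτR₂ : τR₂ = Matrix.of fun i t => τ (r t.succ) i)
    (P : Matrix (Fin T) (Fin n_r) ℝ)
    (hP₁ : R₁ * P * R₁ = R₁) (hP₂ : P * R₁ * P = P)
    (hP₃ : (R₁ * P)ᵀ = R₁ * P) (hP₄ : (P * R₁)ᵀ = P * R₁) :
    D * P = ((Aᵀ * A)⁻¹ * Aᵀ) * (τR₂ - B * R₁) * P := by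
  have hU : IsUnit (Aᵀ * A) := by
    rw [← Matrix.mulVec_surjective_iff_isUnit]
    have hrank : (Aᵀ * A).rank = n_in := by
      rw [Matrix.rank_transpose_mul_self]; exact hA
    have : LinearMap.range (Aᵀ * A).mulVecLin = ⊤ := by
      apply Submodule.eq_top_of_finrank_eq
      rw [← Matrix.rank]
      simp [hrank]
    exact LinearMap.range_eq_top.mp this
  have key : τR₂ - B * R₁ = A * D := by
    ext i t
    have h := congrArg τ (hESN t)
    rw [hστ] at h
    have := congrFun h i
    simp [hτR₂, hR₁, hD, Matrix.sub_apply, Matrix.mul_apply, this,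
      Matrix.mulVec, dotProduct, Pi.add_apply]
  have h1 : (Aᵀ * A)⁻¹ * Aᵀ * A = 1 := by
    rw [Matrix.mul_assoc, Matrix.nonsing_inv_mul _ ((Matrix.isUnit_iff_isUnit_det _).mp hU)]
  rw [key, ← Matrix.mul_assoc ((Aᵀ * A)⁻¹ * Aᵀ) A D, h1, Matrix.one_mul]
end

section
/- Let σ : ℝ^{n_r} → ℝ^{n_r} be a bijection with inverse τ, let A ∈ ℝ^{n_r × n_in} have rank(A) = n_in (so that AᵀA is invertible, and set A⁺ := (AᵀA)⁻¹Aᵀ), let B ∈ ℝ^{n_r × n_r}, and suppose d_1,…,d_T ∈ ℝ^{n_in} and r_1,…,r_{T+1} ∈ ℝ^{n_r} satisfy r_{t+1} = σ(A d_t + B r_t) for all t = 1,…,T. Let 𝒟_{1,T}, ℛ_{1,T}, ℛ_{2,T+1} be the corresponding concatenation matrices and assume additionally rank(ℛ_{1,T}) = n_r (so that ℛ_{1,T} ℛ_{1,T}ᵀ is invertible, and set ℛ_{1,T}⁺ := ℛ_{1,T}ᵀ (ℛ_{1,T} ℛ_{1,T}ᵀ)⁻¹). Then the supervised least-squares readout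 W_𝒟 := 𝒟_{1,T} ℛ_{1,T}⁺ satisfies W_𝒟 = A⁺ (τ(ℛ_{2,T+1}) ℛ_{1,T}⁺ − B). -/
open Matrix


private lemma esn_isUnit_of_rank_eq_card {n : Type*} [Fintype n] [DecidableEq n]
    (M : Matrix n n ℝ) (h : M.rank = Fintype.card n) : IsUnit M := by
  rw [← Matrix.mulVec_surjective_iff_isUnit]
  have : LinearMap.range M.mulVecLin = ⊤ := by
    apply Submodule.eq_top_of_finrank_eq
    simpa [Matrix.rank] using h
  intro y
  exact (LinearMap.range_eq_top.mp this) y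

/-- Theorem 4: with `σ` a bijection with inverse `τ`, `A` of full column rank,
and additionally `ℛ_{1,T}` of full row rank `n_r` (with right inverse
`ℛ_{1,T}⁺ = ℛ_{1,T}ᵀ (ℛ_{1,T} ℛ_{1,T}ᵀ)⁻¹`), the supervised least-squares readout
`W_𝒟 = 𝒟_{1,T} ℛ_{1,T}⁺` equals the simplified unsupervised expression
`A⁺ (τ(ℛ_{2,T+1}) ℛ_{1,T}⁺ − B)`. -/
theorem unsupervised_readout_simplified
    {n_r n_in T : ℕ}
    (σ τ : (Fin n_r → ℝ) → (Fin n_r → ℝ))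
    (hστ : Function.LeftInverse τ σ) (hτσ : Function.RightInverse τ σ)
    (A : Matrix (Fin n_r) (Fin n_in) ℝ) (hA : A.rank = n_in)
    (B : Matrix (Fin n_r) (Fin n_r) ℝ)
    (d : Fin T → (Fin n_in → ℝ)) (r : Fin (T + 1) → (Fin n_r → ℝ))
    (hESN : ∀ t : Fin T, r t.succ = σ (A.mulVec (d t) + B.mulVec (r t.castSucc)))
    (D : Matrix (Fin n_in) (Fin T) ℝ) (hD : D = Matrix.of fun i t => d t i)
    (R₁ : Matrix (Fin n_r) (Fin T) ℝ) (hR₁ : R₁ = Matrix.of fun i t => r t.castSucc i)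
    (τR₂ : Matrix (Fin n_r) (Fin T) ℝ) (hτR₂ : τR₂ = Matrix.of fun i t => τ (r t.succ) i)
    (hR₁rank : R₁.rank = n_r) :
    D * (R₁ᵀ * (R₁ * R₁ᵀ)⁻¹) =
      ((Aᵀ * A)⁻¹ * Aᵀ) * (τR₂ * (R₁ᵀ * (R₁ * R₁ᵀ)⁻¹) - B) := by
  have hAtA : IsUnit (Aᵀ * A) := by
    apply esn_isUnit_of_rank_eq_card
    rw [Matrix.rank_transpose_mul_self, hA, Fintype.card_fin]
  have hRRT : IsUnit (R₁ * R₁ᵀ) := by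
    apply esn_isUnit_of_rank_eq_card
    rw [Matrix.rank_self_mul_transpose, hR₁rank, Fintype.card_fin]
  have hkey : τR₂ = A * D + B * R₁ := by
    subst hD hR₁ hτR₂
    ext i t
    have := congrArg τ (hESN t)
    rw [hστ] at this
    simp [this, Matrix.mul_apply, Matrix.mulVec, dotProduct]
  have h1 : R₁ * (R₁ᵀ * (R₁ * R₁ᵀ)⁻¹) = 1 := by
    rw [← Matrix.mul_assoc, Matrix.mul_nonsing_inv _ ((Matrix.isUnit_iff_isUnit_det _).mp hRRT)]
  have h2 : (Aᵀ * A)⁻¹ * (Aᵀ * A) = 1 :=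
    Matrix.nonsing_inv_mul _ ((Matrix.isUnit_iff_isUnit_det _).mp hAtA)
  rw [hkey, Matrix.add_mul, Matrix.mul_assoc B, h1, Matrix.mul_one, add_sub_cancel_right]
  rw [← Matrix.mul_assoc ((Aᵀ * A)⁻¹ * Aᵀ) (A * D), ← Matrix.mul_assoc ((Aᵀ * A)⁻¹ * Aᵀ) A D,
    Matrix.mul_assoc ((Aᵀ * A)⁻¹) Aᵀ A, h2, Matrix.one_mul]
end
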